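/- Let Γ be a connected locally finite graph with no valence-1 vertices, and let f : Γ → Γ be a combinatorial graph map which is an immersion (locally injective) and a homotopy equivalence that permutes the ends of Γ. Then f is surjective. More precisely: every edge of Γ lying on an immersed circle is in the image of f since f is π₁-surjective, and every separating edge with an acyclic complementary component is in the image since that component contains an end neighborhood. -/

import Mathlib

/-- A (Serre) graph: a vertex set, a set of darts (oriented edges), a
fixed-point-free involution reversing darts, and an initial-vertex map. -/
structure SerreGraph where
  V : Type
  E : Type
  bar : E → E
  bar_bar : ∀ e, bar (bar e) = e
  bar_ne : ∀ e, bar e ≠ e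
  src : E → V

/-- Terminal vertex of a dart. -/
def SerreGraph.tgt (G : SerreGraph) (e : G.E) : G.V := G.src (G.bar e)

/-- Local finiteness of a graph. -/
def SerreGraph.LocFin (G : SerreGraph) : Prop := ∀ v : G.V, {e : G.E | G.src e = v}.Finite

/-- A combinatorial graph morphism (darts to darts). -/
structure GraphHom (G H : SerreGraph) where
  onV : G.V → H.V
  onE : G.E → H.E
  map_bar : ∀ e, onE (G.bar e) = H.bar (onE e)
  map_src : ∀ e, onV (G.src e) = H.src (onE e)

theorem GraphHom.map_tgt {G H : SerreGraph} (f : GraphHom G H) (e : G.E) :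
    f.onV (G.tgt e) = H.tgt (f.onE e) := by
  unfold SerreGraph.tgt; rw [f.map_src, f.map_bar]

/-- Composition of graph morphisms. -/
def GraphHom.comp {G H K : SerreGraph} (g : GraphHom H K) (f : GraphHom G H) :
    GraphHom G K where
  onV := g.onV ∘ f.onV
  onE := g.onE ∘ f.onE
  map_bar e := by simp [Function.comp, f.map_bar, g.map_bar]
  map_src e := by simp [Function.comp, f.map_src, g.map_src]

/-- Identity graph morphism. -/
def GraphHom.id (G : SerreGraph) : GraphHom G G :=
  ⟨fun v => v, fun e => e, fun _ => rfl, fun _ => rfl⟩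

/-- Edge walks in a graph, with explicit endpoint bookkeeping. -/
inductive EWalk (G : SerreGraph) : G.V → G.V → Type where
  | nil (v : G.V) : EWalk G v v
  | cons {u v w : G.V} (e : G.E) (hs : G.src e = u) (ht : G.tgt e = v)
      (p : EWalk G v w) : EWalk G u w

/-- A graph is connected if any two vertices are joined by an edge walk. -/
def SerreGraph.Conn (G : SerreGraph) : Prop := ∀ u v : G.V, Nonempty (EWalk G u v)

/-- Homotopy (rel endpoints) of edge walks: the equivalence relation generated
by cancelling backtracks `e · ē`. -/
inductive Htp (G : SerreGraph) : ∀ {u v : G.V}, EWalk G u v → EWalk G u v → Prop where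
  | refl {u v} (p : EWalk G u v) : Htp G p p
  | symm {u v} {p q : EWalk G u v} : Htp G p q → Htp G q p
  | trans {u v} {p q r : EWalk G u v} : Htp G p q → Htp G q r → Htp G p r
  | cons {u v w} (e : G.E) (hs : G.src e = u) (ht : G.tgt e = v)
      {p q : EWalk G v w} : Htp G p q →
      Htp G (EWalk.cons e hs ht p) (EWalk.cons e hs ht q)
  | cancel {u v w} (e : G.E) (hs : G.src e = u) (ht : G.tgt e = v)
      (hs' : G.src (G.bar e) = v) (ht' : G.tgt (G.bar e) = u)
      (p : EWalk G u w) :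
      Htp G (EWalk.cons e hs ht (EWalk.cons (G.bar e) hs' ht' p)) p

/-- The image of an edge walk under a graph morphism. -/
def GraphHom.mapWalk {G H : SerreGraph} (f : GraphHom G H) :
    ∀ {u v : G.V}, EWalk G u v → EWalk H (f.onV u) (f.onV v)
  | _, _, .nil v => .nil (f.onV v)
  | _, _, .cons e hs ht p =>
      .cons (f.onE e) (by rw [← f.map_src, hs]) (by rw [← f.map_tgt, ht])
        (f.mapWalk p)

/-- `f` induces a bijection on fundamental groups at `v₀` (surjectivity and
injectivity on homotopy classes of loops); for connected graphs this is
equivalent to `f` being a homotopy equivalence. -/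
def InducesPi1Bij {G H : SerreGraph} (f : GraphHom G H) (v₀ : G.V) : Prop :=
  (∀ q : EWalk H (f.onV v₀) (f.onV v₀),
      ∃ p : EWalk G v₀ v₀, Htp H (f.mapWalk p) q) ∧
  (∀ p p' : EWalk G v₀ v₀, Htp H (f.mapWalk p) (f.mapWalk p') → Htp G p p')

/-- Immersions: locally injective combinatorial graph maps. -/
def IsImmersion {G H : SerreGraph} (f : GraphHom G H) : Prop :=
  ∀ a b : G.E, G.src a = G.src b → f.onE a = f.onE b → a = b

/-- Isomorphisms of graphs. -/
def IsGraphIso {G H : SerreGraph} (f : GraphHom G H) : Prop :=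
  Function.Bijective f.onV ∧ Function.Bijective f.onE

/-- `f` is the Stallings fold identifying the (closures of the) distinct darts
`e₁, e₂` with common initial vertex: it is surjective, identifies exactly the
orbits of `{e₁, e₂}` on darts and `{tgt e₁, tgt e₂}` on vertices, and nothing
else. -/
def IsFoldAt {G H : SerreGraph} (f : GraphHom G H) (e₁ e₂ : G.E) : Prop :=
  e₁ ≠ e₂ ∧ e₂ ≠ G.bar e₁ ∧ G.src e₁ = G.src e₂ ∧
  Function.Surjective f.onV ∧ Function.Surjective f.onE ∧
  f.onE e₁ = f.onE e₂ ∧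
  (∀ a b : G.E, f.onE a = f.onE b →
    a = b ∨ ({a, b} : Set G.E) = {e₁, e₂} ∨
      ({a, b} : Set G.E) = {G.bar e₁, G.bar e₂}) ∧
  (∀ u v : G.V, f.onV u = f.onV v →
    u = v ∨ ({u, v} : Set G.V) = {G.tgt e₁, G.tgt e₂})

/-- A Stallings fold. -/
def IsFold {G H : SerreGraph} (f : GraphHom G H) : Prop := ∃ e₁ e₂, IsFoldAt f e₁ e₂

/-- A type-1 Stallings fold: the folded edges have distinct terminal vertices. -/
def IsFold1 {G H : SerreGraph} (f : GraphHom G H) : Prop :=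
  ∃ e₁ e₂, IsFoldAt f e₁ e₂ ∧ G.tgt e₁ ≠ G.tgt e₂

/-- The composite `fs (n-1) ∘ ⋯ ∘ fs 0` of a chain of graph morphisms. -/
def chainComp (Gs : ℕ → SerreGraph) (fs : ∀ i : ℕ, GraphHom (Gs i) (Gs (i + 1))) :
    ∀ n : ℕ, GraphHom (Gs 0) (Gs n)
  | 0 => GraphHom.id (Gs 0)
  | n + 1 => (fs n).comp (chainComp Gs fs n)

/-- A ray in a graph: an infinite edge walk that eventually leaves every finite
set of vertices.  Rays represent ends of the graph. -/
structure GraphRay (G : SerreGraph) where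
  seq : ℕ → G.E
  chain : ∀ n, G.tgt (seq n) = G.src (seq (n + 1))
  proper : ∀ S : Set G.V, S.Finite → ∃ N, ∀ n ≥ N, G.src (seq n) ∉ S

/-!
If `f` misses a dart `e`, then every walk in the image of `f` crosses the edge `{e, ē}` an even
number of times. This parity is a homotopy invariant, so by π₁-surjectivity every closed walk
crosses `e` evenly, i.e. `e` is a bridge; the same holds for every dart missed by `f`. The image
of `f` is connected and avoids `e`, so it lies on one side of `e`, and on the other side every
dart is missed by `f`, hence is a bridge. As no vertex has valence 1, a non-backtracking walk
can be continued forever into that side; a non-backtracking walk made of bridges never returns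
to a vertex, so it is a ray whose end is not in the image of `f`.
-/

section

variable {G H : SerreGraph}

namespace SerreGraph

lemma tgt_bar (e : G.E) : G.tgt (G.bar e) = G.src e := by
  rw [tgt, bar_bar]

def edge (G : SerreGraph) (e : G.E) : Set G.E := {e, G.bar e}

lemma bar_mem_edge {e d : G.E} : G.bar d ∈ G.edge e ↔ d ∈ G.edge e := by
  have hinv : Function.Involutive G.bar := G.bar_bar
  simp only [edge, Set.mem_insert_iff, Set.mem_singleton_iff]
  rw [hinv.eq_iff, hinv.eq_iff, G.bar_bar, or_comm]

lemma edge_bar (e : G.E) : G.edge (G.bar e) = G.edge e := by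
  rw [edge, edge, bar_bar, Set.pair_comm]

def Reach (G : SerreGraph) (e : G.E) : G.V → G.V → Prop :=
  Relation.ReflTransGen fun u v => ∃ d ∉ G.edge e, G.src d = u ∧ G.tgt d = v

lemma reach_of_notMem_edge {e d : G.E} (hd : d ∉ G.edge e) :
    G.Reach e (G.src d) (G.tgt d) :=
  .single ⟨d, hd, rfl, rfl⟩

lemma Reach.symm {e : G.E} {u v : G.V} (h : G.Reach e u v) : G.Reach e v u := by
  induction h with
  | refl => exact .refl
  | tail _ hstep ih =>
    obtain ⟨d, hd, rfl, rfl⟩ := hstep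
    exact .head ⟨G.bar d, bar_mem_edge.not.2 hd, rfl, tgt_bar d⟩ ih

lemma reach_bar (e : G.E) : G.Reach (G.bar e) = G.Reach e := by
  simp only [Reach, edge_bar]

def IsBridge (G : SerreGraph) (e : G.E) : Prop := ¬ G.Reach e (G.src e) (G.tgt e)

def beyond (G : SerreGraph) (e : G.E) : Set G.V := {v | G.Reach e (G.tgt e) v}

lemma tgt_mem_beyond (e : G.E) : G.tgt e ∈ G.beyond e := Relation.ReflTransGen.refl

lemma IsBridge.src_notMem_beyond {e : G.E} (he : G.IsBridge e) : G.src e ∉ G.beyond e :=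
  fun h => he h.symm

end SerreGraph

namespace EWalk

def append : ∀ {u v w : G.V}, EWalk G u v → EWalk G v w → EWalk G u w
  | _, _, _, .nil _, q => q
  | _, _, _, .cons d hs ht p, q => .cons d hs ht (p.append q)

open Classical in
noncomputable def crossings (e : G.E) : ∀ {u v : G.V}, EWalk G u v → ZMod 2
  | _, _, .nil _ => 0
  | _, _, .cons d _ _ p => (if d ∈ G.edge e then 1 else 0) + p.crossings e

lemma crossings_append (e : G.E) {u v w : G.V} (p : EWalk G u v) (q : EWalk G v w) :
    (p.append q).crossings e = p.crossings e + q.crossings e := by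
  induction p with
  | nil => simp [append, crossings]
  | cons _ _ _ _ ih => simp only [append, crossings, ih, add_assoc]

end EWalk

lemma Htp.crossings_eq {e : G.E} {u v : G.V} {p q : EWalk G u v} (h : Htp G p q) :
    p.crossings e = q.crossings e := by
  induction h with
  | refl => rfl
  | symm _ ih => exact ih.symm
  | trans _ _ ih₁ ih₂ => exact ih₁.trans ih₂
  | cons _ _ _ _ ih => simp only [EWalk.crossings, ih]
  | cancel d _ _ _ _ =>
    by_cases hd : d ∈ G.edge e
    · simp [EWalk.crossings, hd, SerreGraph.bar_mem_edge.2 hd, ← add_assoc,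
        CharTwo.add_self_eq_zero]
    · simp [EWalk.crossings, hd, SerreGraph.bar_mem_edge.not.2 hd]

lemma SerreGraph.Reach.exists_crossings_eq_zero {e : G.E} {u v : G.V} (h : G.Reach e u v) :
    ∃ p : EWalk G u v, p.crossings e = 0 := by
  induction h using Relation.ReflTransGen.head_induction_on with
  | refl => exact ⟨.nil _, rfl⟩
  | head hstep _ ih =>
    obtain ⟨d, hd, hs, ht⟩ := hstep
    obtain ⟨p, hp⟩ := ih
    exact ⟨.cons d hs ht p, by simp [EWalk.crossings, hd, hp]⟩

lemma SerreGraph.isBridge_of_forall_crossings_eq_zero (hconn : G.Conn) {e : G.E} {x : G.V}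
    (h : ∀ c : EWalk G x x, c.crossings e = 0) : G.IsBridge e := by
  intro hreach
  obtain ⟨β, hβ⟩ := hreach.symm.exists_crossings_eq_zero
  obtain ⟨α⟩ := hconn x (G.src e)
  obtain ⟨γ⟩ := hconn (G.src e) x
  -- the two closed walks `α γ` and `α e β γ` differ by exactly one crossing of `e`
  have h₁ := h (α.append γ)
  have h₂ := h (α.append (.cons e rfl rfl (β.append γ)))
  simp only [EWalk.crossings_append, EWalk.crossings, hβ, SerreGraph.edge,
    Set.mem_insert_iff, true_or, if_true] at h₁ h₂
  exact one_ne_zero (by linear_combination h₂ - h₁ : (1 : ZMod 2) = 0)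

namespace GraphHom

variable (f : GraphHom G H)

lemma onE_notMem_edge {e : H.E} (he : e ∉ Set.range f.onE) (a : G.E) :
    f.onE a ∉ H.edge e := by
  rintro (h | h)
  · exact he ⟨a, h⟩
  · exact he ⟨G.bar a, by rw [f.map_bar, h, H.bar_bar]⟩

lemma crossings_mapWalk_eq_zero {e : H.E} (he : e ∉ Set.range f.onE) {u v : G.V}
    (p : EWalk G u v) : (f.mapWalk p).crossings e = 0 := by
  induction p with
  | nil => rfl
  | cons _ _ _ _ ih => simp [mapWalk, EWalk.crossings, f.onE_notMem_edge he, ih]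

lemma isBridge_of_notMem_range (hconn : H.Conn) {v₀ : G.V} (hf : InducesPi1Bij f v₀)
    {e : H.E} (he : e ∉ Set.range f.onE) : H.IsBridge e :=
  H.isBridge_of_forall_crossings_eq_zero hconn fun c => by
    obtain ⟨p, hp⟩ := hf.1 c
    rw [← hp.crossings_eq, f.crossings_mapWalk_eq_zero he]

lemma reach_map {e : H.E} (he : e ∉ Set.range f.onE) {u v : G.V} (p : EWalk G u v) :
    H.Reach e (f.onV u) (f.onV v) := by
  induction p with
  | nil => exact .refl
  | cons d hs ht p ih =>
    subst hs ht
    rw [f.map_src]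
    exact (H.reach_of_notMem_edge (f.onE_notMem_edge he d)).trans (f.map_tgt d ▸ ih)

-- The witness is `e` or `ē`, according to the side of `e` on which the image of `f` lies.
lemma exists_notMem_range_image_disjoint_beyond (hconn : G.Conn) {e : H.E}
    (he : e ∉ Set.range f.onE) (hbridge : H.IsBridge e) :
    ∃ e' ∉ Set.range f.onE, ∀ u, f.onV u ∉ H.beyond e' := by
  by_cases hfar : ∃ u, f.onV u ∈ H.beyond e
  · obtain ⟨u, hu⟩ := hfar
    refine ⟨H.bar e, fun ⟨a, ha⟩ => he ⟨G.bar a, by rw [f.map_bar, ha, H.bar_bar]⟩, ?_⟩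
    intro w hw
    replace hw : H.Reach (H.bar e) (H.tgt (H.bar e)) (f.onV w) := hw
    rw [SerreGraph.reach_bar, SerreGraph.tgt_bar] at hw
    obtain ⟨p⟩ := hconn w u
    exact hbridge ((hw.trans (f.reach_map he p)).trans hu.symm)
  · exact ⟨e, he, fun u hu => hfar ⟨u, hu⟩⟩

end GraphHom

lemma SerreGraph.beyond_subset_beyond {d d' : G.E} (hd' : G.IsBridge d')
    (hsrc : G.src d' = G.tgt d) (hnb : d' ≠ G.bar d) : G.beyond d' ⊆ G.beyond d := by
  have hnd : d' ≠ d := by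
    rintro rfl
    exact hd' (hsrc ▸ .refl)
  intro v hv
  induction hv with
  | refl =>
    show G.Reach d (G.tgt d) (G.tgt d')
    exact hsrc ▸ G.reach_of_notMem_edge (by rintro (h | h) <;> contradiction)
  | tail hreach hstep ih =>
    obtain ⟨a, ha, rfl, rfl⟩ := hstep
    -- crossing `d` would bring the walk back to `src d'`, which `d'` separates from `tgt d'`
    refine ih.tail ⟨a, ?_, rfl, rfl⟩
    rintro (rfl | rfl)
    · exact hd'.src_notMem_beyond (hsrc ▸ hreach.tail ⟨a, ha, rfl, rfl⟩)
    · exact hd'.src_notMem_beyond (by rw [hsrc]; exact hreach)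

def GraphRay.ofInjective (s : ℕ → G.E) (chain : ∀ n, G.tgt (s n) = G.src (s (n + 1)))
    (hinj : Function.Injective (G.src ∘ s)) : GraphRay G where
  seq := s
  chain := chain
  proper S hS := by
    obtain ⟨N, hN⟩ := (hS.preimage hinj.injOn).bddAbove
    exact ⟨N + 1, fun n hn hmem => by have := hN hmem; omega⟩

lemma SerreGraph.exists_ray_beyond
    (hval : ∀ (v : G.V) (e : G.E), G.src e = v → ∃ e', e' ≠ e ∧ G.src e' = v)
    {e : G.E} (he : G.IsBridge e) (hforest : ∀ d, G.src d ∈ G.beyond e → G.IsBridge d) :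
    ∃ r : GraphRay G, ∀ n, G.tgt (r.seq n) ∈ G.beyond e := by
  choose next hnext_ne hnext_src using fun d : G.E => hval (G.tgt d) (G.bar d) rfl
  set s : ℕ → G.E := fun n => next^[n] e
  have hs_succ (n : ℕ) : s (n + 1) = next (s n) := Function.iterate_succ_apply' next n e
  have hchain (n : ℕ) : G.tgt (s n) = G.src (s (n + 1)) := by rw [hs_succ, hnext_src]
  have hstep (n : ℕ) (hb : G.IsBridge (s (n + 1))) : G.beyond (s (n + 1)) ⊆ G.beyond (s n) :=
    G.beyond_subset_beyond hb (hchain n).symm (by rw [hs_succ]; exact hnext_ne _)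
  have hbridge (n : ℕ) : G.IsBridge (s n) ∧ G.beyond (s n) ⊆ G.beyond e := by
    induction n with
    | zero => exact ⟨he, subset_rfl⟩
    | succ n ih =>
      have hb := hforest _ (hchain n ▸ ih.2 (G.tgt_mem_beyond (s n)))
      exact ⟨hb, (hstep n hb).trans ih.2⟩
  have hanti : Antitone fun n => G.beyond (s n) :=
    antitone_nat_of_succ_le fun n => hstep n (hbridge (n + 1)).1
  have hinj : Function.Injective (G.src ∘ s) := by
    refine .of_lt_imp_ne fun k m hkm heq => (hbridge k).1.src_notMem_beyond ?_
    obtain ⟨m, rfl⟩ : ∃ m', m = m' + 1 := ⟨m - 1, by omega⟩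
    rw [Function.comp_apply, Function.comp_apply] at heq
    rw [heq, ← hchain]
    exact hanti (Nat.le_of_lt_succ hkm) (G.tgt_mem_beyond (s m))
  exact ⟨.ofInjective s hchain hinj, fun n => (hbridge n).2 (G.tgt_mem_beyond _)⟩

lemma GraphHom.surjective_onV_of_surjective_onE (hconn : G.Conn) (f : GraphHom G G)
    (hE : Function.Surjective f.onE) : Function.Surjective f.onV := by
  intro v
  obtain ⟨p⟩ := hconn v (f.onV v)
  generalize hw : f.onV v = w at p
  cases p with
  | nil => exact ⟨v, hw⟩
  | cons d hs _ _ =>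
    obtain ⟨a, rfl⟩ := hE d
    exact ⟨G.src a, by rw [f.map_src, hs]⟩

end

theorem immersed_homotopy_equivalence_permuting_ends_is_surjective_general
    {G : SerreGraph} (hconn : G.Conn)
    (hval : ∀ (v : G.V) (e : G.E), G.src e = v → ∃ e', e' ≠ e ∧ G.src e' = v)
    (f : GraphHom G G)
    (v₀ : G.V) (hhe : InducesPi1Bij f v₀)
    (hends : ∀ r : GraphRay G, ∃ (r' : GraphRay G) (φ : ℕ → ℕ), StrictMono φ ∧
        ∀ n, f.onE (r'.seq n) = r.seq (φ n)) :
    Function.Surjective f.onV ∧ Function.Surjective f.onE := by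
  have hE : Function.Surjective f.onE := by
    intro e
    by_contra he
    obtain ⟨e', he', hfar⟩ := f.exists_notMem_range_image_disjoint_beyond hconn he
      (f.isBridge_of_notMem_range hconn hhe he)
    have hforest (d : G.E) (hd : G.src d ∈ G.beyond e') : G.IsBridge d :=
      f.isBridge_of_notMem_range hconn hhe fun ⟨a, ha⟩ =>
        hfar (G.src a) (by rwa [f.map_src, ha])
    obtain ⟨r, hr⟩ :=
      G.exists_ray_beyond hval (f.isBridge_of_notMem_range hconn hhe he') hforest
    obtain ⟨r', φ, -, hφ⟩ := hends r
    exact hfar (G.tgt (r'.seq 0)) (by rw [f.map_tgt, hφ]; exact hr _)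
  exact ⟨f.surjective_onV_of_surjective_onE hconn hE, hE⟩

theorem immersed_homotopy_equivalence_permuting_ends_is_surjective
    {G : SerreGraph} (hconn : G.Conn) (hV : Infinite G.V) (hlf : G.LocFin)
    (hval : ∀ (v : G.V) (e : G.E), G.src e = v → ∃ e', e' ≠ e ∧ G.src e' = v)
    (f : GraphHom G G) (himm : IsImmersion f)
    (v₀ : G.V) (hhe : InducesPi1Bij f v₀)
    (hends : ∀ r : GraphRay G, ∃ (r' : GraphRay G) (φ : ℕ → ℕ), StrictMono φ ∧
        ∀ n, f.onE (r'.seq n) = r.seq (φ n)) :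
    Function.Surjective f.onV ∧ Function.Surjective f.onE :=
  immersed_homotopy_equivalence_permuting_ends_is_surjective_general hconn hval f v₀ hhe hends
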